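/- arXiv:2011.04902 — 3 statements merged into one kernel-verified Lean document; each statement's English description precedes it below -/
import Mathlib

section
/- Let ε be a constant with 0 < ε ≤ 1 and c a constant with 0 < c < ε·log₂(e)/2. Throw ⌊εn⌋ balls independently and uniformly at random into ⌈cn/log₂ log₂ log₂ n⌉ bins. For a fixed bin, the probability that it contains exactly one ball is O(1/(log₂ log₂ n)^d) for some constant d > 1 depending on ε and c, for all sufficiently large n. -/
open Finset in
lemma count_exactly_one_le (k m : ℕ) (j : Fin m) :
    ((Finset.univ.filter (fun f : Fin k → Fin m =>
      (Finset.univ.filter (fun i => f i = j)).card = 1)).card) ≤ k * (m-1)^(k-1) := by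
  classical
  have hsub : (Finset.univ.filter (fun f : Fin k → Fin m =>
      (Finset.univ.filter (fun i => f i = j)).card = 1)) ⊆
      Finset.univ.biUnion (fun i : Fin k =>
        Fintype.piFinset (fun i' => if i' = i then {j} else {j}ᶜ)) := by
    intro f hf
    simp only [Finset.mem_filter] at hf
    obtain ⟨i, hi⟩ := Finset.card_eq_one.mp hf.2
    refine Finset.mem_biUnion.mpr ⟨i, Finset.mem_univ _, ?_⟩
    rw [Fintype.mem_piFinset]
    intro i'
    by_cases h : i' = i
    · subst h
      have : i' ∈ Finset.univ.filter (fun i => f i = j) := by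
        rw [hi]; exact Finset.mem_singleton_self i'
      simp only [Finset.mem_filter] at this
      simp [this.2]
    · simp only [if_neg h, Finset.mem_compl, Finset.mem_singleton]
      intro hji
      have : i' ∈ ({i} : Finset (Fin k)) := by
        rw [← hi]; simp [hji]
      simp only [Finset.mem_singleton] at this
      exact h this
  have hcard : ∀ i : Fin k,
      (Fintype.piFinset (fun i' => if i' = i then ({j} : Finset (Fin m)) else {j}ᶜ)).card
        = (m-1)^(k-1) := by
    intro i
    rw [Fintype.card_piFinset]
    have : ∀ i' : Fin k, ((if i' = i then ({j} : Finset (Fin m)) else {j}ᶜ)).card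
        = if i' = i then 1 else m - 1 := by
      intro i'; split_ifs <;> simp [Finset.card_compl]
    simp_rw [this]
    rw [← Finset.mul_prod_erase Finset.univ _ (Finset.mem_univ i), if_pos rfl, one_mul]
    rw [Finset.prod_congr rfl (fun x hx => if_neg (Finset.ne_of_mem_erase hx)),
      Finset.prod_const, Finset.card_erase_of_mem (Finset.mem_univ i), Finset.card_univ,
      Fintype.card_fin]
  calc _ ≤ _ := Finset.card_le_card hsub
    _ ≤ ∑ i : Fin k, (Fintype.piFinset (fun i' =>
          if i' = i then ({j} : Finset (Fin m)) else {j}ᶜ)).card := Finset.card_biUnion_le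
    _ = ∑ _i : Fin k, (m-1)^(k-1) := by simp_rw [hcard]
    _ = k * (m-1)^(k-1) := by simp [mul_comm]

lemma logb_two_le_self {x : ℝ} (hx : 0 < x) : Real.logb 2 x ≤ x := by
  have h2 : (0.6931471803 : ℝ) < Real.log 2 := Real.log_two_gt_d9
  have hs : Real.log x ≤ 2 * (Real.sqrt x - 1) := by
    have h1 := Real.log_le_sub_one_of_pos (Real.sqrt_pos.mpr hx)
    have hlx : Real.log (Real.sqrt x) = Real.log x / 2 := Real.log_sqrt hx.le
    linarith
  have ht : Real.sqrt x ^ 2 = x := Real.sq_sqrt hx.le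
  have ht0 : 0 ≤ Real.sqrt x := Real.sqrt_nonneg x
  have hm : x * 0.6931471803 ≤ x * Real.log 2 :=
    mul_le_mul_of_nonneg_left h2.le hx.le
  rw [Real.logb, div_le_iff₀ (by linarith)]
  nlinarith [sq_nonneg ((0.6931471803:ℝ) * Real.sqrt x - 1)]

lemma logb_two_le_two_sqrt {x : ℝ} (hx : 0 < x) : Real.logb 2 x ≤ 2 * Real.sqrt x := by
  have h := logb_two_le_self (Real.sqrt_pos.mpr hx)
  have hlx : Real.logb 2 x = 2 * Real.logb 2 (Real.sqrt x) := by
    rw [Real.logb, Real.logb, Real.log_sqrt hx.le]; ring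
  linarith

lemma le_logb_of_rpow_le {y x : ℝ} (hx : 0 < x) (h : (2:ℝ) ^ y ≤ x) :
    y ≤ Real.logb 2 x := (Real.le_logb_iff_rpow_le one_lt_two hx).mpr h

set_option maxHeartbeats 1000000 in
lemma abstract_bound (ε c δ α L M nr : ℝ) (k m : ℕ) (j : Fin m)
    (hε : 0 < ε) (hc : 0 < c) (hδ0 : 0 < δ) (hδ1 : δ < 1) (hα0 : 0 < α)
    (hM0 : 0 < M) (hL0 : 0 < L)
    (hLlog : (ε/c)*L = α * Real.log M)
    (hexpval : (δ:ℝ) + -((1-δ)*α) = -2)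
    (hεnr : 0 < ε * nr)
    (hK_ub : (k:ℝ) ≤ ε * nr)
    (hKd : (1 - δ/2) * (ε * nr) ≤ (k:ℝ) - 1)
    (hk1 : 1 ≤ k) (hm1 : 1 ≤ m)
    (hmr0 : 0 < c * nr / L)
    (hm_lb : c * nr / L ≤ (m:ℝ))
    (hm_ub : (m:ℝ) ≤ (1 + δ/2) * (c * nr / L)) :
    ((Finset.univ.filter (fun f : Fin k → Fin m =>
        (Finset.univ.filter (fun i : Fin k => f i = j)).card = 1)).card : ℝ)
      / ((m ^ k : ℕ) : ℝ) ≤ (α/δ) / M ^ (2:ℝ) := by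
  obtain ⟨q, rfl⟩ : ∃ q, k = q + 1 := ⟨k - 1, by omega⟩
  set K : ℝ := ((q+1 : ℕ) : ℝ) with hKdef
  set Mm : ℝ := (m : ℝ) with hMmdef
  have hMm0 : (0:ℝ) < Mm := lt_of_lt_of_le hmr0 hm_lb
  have hMm1 : (1:ℝ) ≤ Mm := by rw [hMmdef]; exact_mod_cast hm1
  -- counting bound
  have hcount := count_exactly_one_le (q+1) m j
  rw [Nat.add_sub_cancel] at hcount
  have hnum : ((Finset.univ.filter
      (fun f : Fin (q+1) → Fin m =>
        (Finset.univ.filter (fun i : Fin (q+1) => f i = j)).card = 1)).card : ℝ)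
      ≤ K * (Mm - 1) ^ q := by
    calc ((Finset.univ.filter
        (fun f : Fin (q+1) → Fin m =>
          (Finset.univ.filter (fun i : Fin (q+1) => f i = j)).card = 1)).card : ℝ)
        ≤ (((q+1) * (m-1)^q : ℕ) : ℝ) := by exact_mod_cast hcount
      _ = K * (Mm - 1) ^ q := by
          rw [hKdef, hMmdef]
          push_cast [Nat.cast_sub hm1]
          ring
  have hden0 : (0:ℝ) < Mm ^ (q+1) := by positivity
  have step1 : ((Finset.univ.filter
      (fun f : Fin (q+1) → Fin m =>
        (Finset.univ.filter (fun i : Fin (q+1) => f i = j)).card = 1)).card : ℝ) / Mm ^ (q+1)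
      ≤ (K / Mm) * ((Mm - 1)/Mm) ^ q := by
    calc _ ≤ K * (Mm - 1) ^ q / Mm ^ (q+1) :=
          div_le_div_of_nonneg_right hnum hden0.le
      _ = (K / Mm) * ((Mm - 1)/Mm) ^ q := by
          rw [div_pow, div_mul_div_comm, pow_succ']
  -- exponential bound
  have hq_cast : (q:ℝ) = K - 1 := by rw [hKdef]; push_cast; ring
  have hbase0 : 0 ≤ (Mm - 1)/Mm := div_nonneg (by linarith) hMm0.le
  have hbase : (Mm - 1)/Mm ≤ Real.exp (-(1/Mm)) := by
    have h := Real.add_one_le_exp (-(1/Mm))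
    have heq : (Mm - 1)/Mm = 1 - 1/Mm := by field_simp
    rw [heq]; linarith
  have hpow : ((Mm - 1)/Mm) ^ q ≤ Real.exp (-(1/Mm)) ^ q :=
    pow_le_pow_left₀ hbase0 hbase q
  have hexp_eq : Real.exp (-(1/Mm)) ^ q = Real.exp (-((K-1)/Mm)) := by
    rw [← Real.exp_nat_mul]
    congr 1
    rw [hq_cast]; ring
  have hexp2 : (1-δ)*((ε/c)*L) ≤ (K-1)/Mm := by
    rw [le_div_iff₀ hMm0]
    have hεcL : (0:ℝ) ≤ (1-δ)*((ε/c)*L) :=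
      mul_nonneg (by linarith) (mul_nonneg (div_pos hε hc).le hL0.le)
    have h1 : (1-δ)*((ε/c)*L)*Mm ≤ (1-δ)*((ε/c)*L)*((1+δ/2)*(c*nr/L)) :=
      mul_le_mul_of_nonneg_left hm_ub hεcL
    have h2 : (1-δ)*((ε/c)*L)*((1+δ/2)*(c*nr/L)) = (1-δ)*(1+δ/2)*(ε*nr) := by
      field_simp
    have hfac : (1-δ)*(1+δ/2) ≤ 1-δ/2 := by
      have hsqδ : 0 ≤ δ^2 := sq_nonneg δ
      have hring : (1-δ)*(1+δ/2) = 1 - δ/2 - δ^2/2 := by ring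
      rw [hring]; linarith
    have h3 : (1-δ)*(1+δ/2)*(ε*nr) ≤ (1-δ/2)*(ε*nr) :=
      mul_le_mul_of_nonneg_right hfac hεnr.le
    have hKd' : (1 - δ/2) * (ε * nr) ≤ K - 1 := hKd
    linarith
  have hchain : ((Mm-1)/Mm)^q ≤ Real.exp (-((1-δ)*((ε/c)*L))) := by
    calc ((Mm-1)/Mm)^q ≤ Real.exp (-(1/Mm)) ^ q := hpow
      _ = Real.exp (-((K-1)/Mm)) := hexp_eq
      _ ≤ _ := Real.exp_le_exp.mpr (by linarith)
  have hKM : K/Mm ≤ (ε/c)*L := by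
    have hK0 : (0:ℝ) ≤ K := by positivity
    have hnr : (0:ℝ) < nr := by nlinarith
    calc K/Mm ≤ (ε*nr)/(c*nr/L) := div_le_div₀ hεnr.le hK_ub hmr0 hm_lb
      _ = (ε/c)*L := by
          field_simp [hc.ne', hnr.ne', hL0.ne']
  have step2 : (K/Mm) * ((Mm-1)/Mm)^q ≤ ((ε/c)*L) * Real.exp (-((1-δ)*((ε/c)*L))) :=
    mul_le_mul hKM hchain (pow_nonneg hbase0 q)
      (mul_nonneg (div_pos hε hc).le hL0.le)
  have hfront : α * Real.log M ≤ (α/δ) * M ^ (δ:ℝ) := by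
    have hr0 : (0:ℝ) < M ^ (δ:ℝ) := Real.rpow_pos_of_pos hM0 δ
    have h1 : Real.log (M ^ (δ:ℝ)) ≤ M ^ (δ:ℝ) - 1 := Real.log_le_sub_one_of_pos hr0
    rw [Real.log_rpow hM0] at h1
    have h2 : δ * Real.log M ≤ M ^ (δ:ℝ) := by linarith
    calc α * Real.log M = (α/δ) * (δ * Real.log M) := by field_simp
      _ ≤ (α/δ) * M ^ (δ:ℝ) := mul_le_mul_of_nonneg_left h2 (by positivity)
  have hexp_rpow : Real.exp (-((1-δ)*(α * Real.log M))) = M ^ (-((1-δ)*α) : ℝ) := by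
    rw [Real.rpow_def_of_pos hM0]; congr 1; ring
  have step3 : ((ε/c)*L) * Real.exp (-((1-δ)*((ε/c)*L)))
      ≤ (α/δ) * M ^ ((δ:ℝ) + -((1-δ)*α)) := by
    rw [hLlog]
    calc α * Real.log M * Real.exp (-((1-δ)*(α * Real.log M)))
        ≤ ((α/δ) * M ^ (δ:ℝ)) * (M ^ (-((1-δ)*α) : ℝ)) := by
          rw [← hexp_rpow]
          exact mul_le_mul_of_nonneg_right hfront (Real.exp_pos _).le
      _ = (α/δ) * M ^ ((δ:ℝ) + -((1-δ)*α)) := by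
          rw [Real.rpow_add hM0]; ring
  calc ((Finset.univ.filter
      (fun f : Fin (q+1) → Fin m =>
        (Finset.univ.filter (fun i : Fin (q+1) => f i = j)).card = 1)).card : ℝ)
        / ((m ^ (q+1) : ℕ) : ℝ)
      = ((Finset.univ.filter
      (fun f : Fin (q+1) → Fin m =>
        (Finset.univ.filter (fun i : Fin (q+1) => f i = j)).card = 1)).card : ℝ) / Mm ^ (q+1) := by
        rw [Nat.cast_pow]
    _ ≤ (K/Mm) * ((Mm-1)/Mm)^q := step1
    _ ≤ ((ε/c)*L) * Real.exp (-((1-δ)*((ε/c)*L))) := step2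
    _ ≤ (α/δ) * M ^ ((δ:ℝ) + -((1-δ)*α)) := step3
    _ = (α/δ) / M ^ (2:ℝ) := by
        rw [hexpval, show (-2:ℝ) = -(2:ℝ) from by norm_num, Real.rpow_neg hM0.le]
        ring

set_option maxHeartbeats 1000000 in
/-- Throw `⌊εn⌋` balls uniformly and independently into
`⌈cn / lg lg lg n⌉` bins, where `0 < ε ≤ 1` and `0 < c < ε·log₂(e)/2`.
For a fixed bin, the probability of exactly one ball in that bin is
`O(1/(lg lg n)^d)` for some constant `d > 1` (depending on `ε`, `c`), for all
sufficiently large `n`. -/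
theorem llb_success_probability_upper_bound (ε c : ℝ)
    (hε : 0 < ε) (hε1 : ε ≤ 1) (hc : 0 < c)
    (hcu : c < ε * Real.logb 2 (Real.exp 1) / 2) :
    ∃ d : ℝ, 1 < d ∧ ∃ C : ℝ, 0 < C ∧ ∃ N : ℕ, ∀ n : ℕ, N ≤ n →
      ∀ j : Fin ⌈c * n / Real.logb 2 (Real.logb 2 (Real.logb 2 n))⌉₊,
      ((Finset.univ.filter
            (fun f : Fin ⌊ε * n⌋₊ →
                Fin ⌈c * n / Real.logb 2 (Real.logb 2 (Real.logb 2 n))⌉₊ =>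
              (Finset.univ.filter (fun i : Fin ⌊ε * n⌋₊ => f i = j)).card = 1)).card : ℝ) /
          ((⌈c * n / Real.logb 2 (Real.logb 2 (Real.logb 2 n))⌉₊ : ℕ) ^ ⌊ε * n⌋₊ : ℕ) ≤
        C / Real.logb 2 (Real.logb 2 n) ^ d := by
  have hlog2 : 0 < Real.log 2 := Real.log_pos one_lt_two
  set α : ℝ := ε / (c * Real.log 2) with hαdef
  have hα2 : 2 < α := by
    have he : Real.logb 2 (Real.exp 1) = 1 / Real.log 2 := by
      rw [Real.logb, Real.log_exp]
    rw [he, mul_one_div, div_div] at hcu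
    have h1 : c * (Real.log 2 * 2) < ε := (lt_div_iff₀ (by positivity)).mp hcu
    rw [hαdef, lt_div_iff₀ (by positivity)]
    linarith
  set δ : ℝ := (α - 2) / (α + 1) with hδdef
  have hδ0 : 0 < δ := div_pos (by linarith) (by linarith)
  have hδ1 : δ < 1 := by rw [hδdef, div_lt_one (by linarith)]; linarith
  have hδval : δ * (α + 1) = α - 2 := by
    rw [hδdef]; field_simp
  clear_value δ α
  have hα0 : (0:ℝ) < α := by linarith
  have hexpval : (δ:ℝ) + -((1-δ)*α) = -2 := by linear_combination hδval
  refine ⟨2, one_lt_two, α/δ, by positivity,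
    max 16 (max ⌈4/(δ*ε)⌉₊ ⌈(4/(δ*c))^2⌉₊), ?_⟩
  intro n hn j
  have hn16 : (16:ℝ) ≤ (n:ℝ) := by
    have h : (16:ℕ) ≤ n := le_trans (le_max_left _ _) hn
    exact_mod_cast h
  have hn0 : (0:ℝ) < (n:ℝ) := by linarith
  have hδε : 4/(δ*ε) ≤ (n:ℝ) := by
    have h : ⌈4/(δ*ε)⌉₊ ≤ n := le_trans (le_trans (le_max_left _ _) (le_max_right _ _)) hn
    exact_mod_cast Nat.ceil_le.mp h
  have hδc : (4/(δ*c))^2 ≤ (n:ℝ) := by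
    have h : ⌈(4/(δ*c))^2⌉₊ ≤ n := le_trans (le_trans (le_max_right _ _) (le_max_right _ _)) hn
    exact_mod_cast Nat.ceil_le.mp h
  have hlgn4 : (4:ℝ) ≤ Real.logb 2 (n:ℝ) := by
    apply le_logb_of_rpow_le hn0
    have hppow : (2:ℝ) ^ (4:ℝ) = (16:ℝ) := by
      rw [show (4:ℝ) = ((4:ℕ):ℝ) by norm_num, Real.rpow_natCast]; norm_num
    rw [hppow]; linarith
  have hlgn0 : (0:ℝ) < Real.logb 2 (n:ℝ) := by linarith
  have hM2 : (2:ℝ) ≤ Real.logb 2 (Real.logb 2 (n:ℝ)) := by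
    apply le_logb_of_rpow_le hlgn0
    have hppow : (2:ℝ) ^ (2:ℝ) = (4:ℝ) := by
      rw [show (2:ℝ) = ((2:ℕ):ℝ) by norm_num, Real.rpow_natCast]; norm_num
    rw [hppow]; linarith
  have hM0 : (0:ℝ) < Real.logb 2 (Real.logb 2 (n:ℝ)) := by linarith
  have hL1 : (1:ℝ) ≤ Real.logb 2 (Real.logb 2 (Real.logb 2 (n:ℝ))) := by
    apply le_logb_of_rpow_le hM0
    have hppow : (2:ℝ) ^ (1:ℝ) = (2:ℝ) := by
      rw [show (1:ℝ) = ((1:ℕ):ℝ) by norm_num, Real.rpow_natCast]; norm_num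
    rw [hppow]; linarith
  have hL0 : (0:ℝ) < Real.logb 2 (Real.logb 2 (Real.logb 2 (n:ℝ))) := by linarith
  have hεnr : (0:ℝ) < ε * (n:ℝ) := by positivity
  have hK_ub : ((⌊ε * (n:ℝ)⌋₊ : ℕ) : ℝ) ≤ ε * (n:ℝ) := Nat.floor_le (by positivity)
  have hK_lb : ε * (n:ℝ) - 1 < ((⌊ε * (n:ℝ)⌋₊ : ℕ) : ℝ) := Nat.sub_one_lt_floor _
  have h4 : 4 ≤ δ * (ε * (n:ℝ)) := by
    rw [div_le_iff₀ (by positivity)] at hδε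
    nlinarith
  have hKd : (1 - δ/2) * (ε * (n:ℝ)) ≤ ((⌊ε * (n:ℝ)⌋₊ : ℕ) : ℝ) - 1 := by nlinarith
  have hK1 : (1:ℝ) < ((⌊ε * (n:ℝ)⌋₊ : ℕ) : ℝ) := by nlinarith
  have hk1 : 1 ≤ ⌊ε * (n:ℝ)⌋₊ := by exact_mod_cast hK1.le
  have hm1 : 1 ≤ ⌈c * (n:ℝ) / Real.logb 2 (Real.logb 2 (Real.logb 2 (n:ℝ)))⌉₊ := j.pos
  have hmr0 : (0:ℝ) < c * (n:ℝ) / Real.logb 2 (Real.logb 2 (Real.logb 2 (n:ℝ))) := by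
    positivity
  have hm_lb : c * (n:ℝ) / Real.logb 2 (Real.logb 2 (Real.logb 2 (n:ℝ)))
      ≤ ((⌈c * (n:ℝ) / Real.logb 2 (Real.logb 2 (Real.logb 2 (n:ℝ)))⌉₊ : ℕ) : ℝ) :=
    Nat.le_ceil _
  have hsq : 4/(δ*c) ≤ Real.sqrt (n:ℝ) := by
    have h := Real.sqrt_le_sqrt hδc
    rwa [Real.sqrt_sq (by positivity)] at h
  have hL_sq : Real.logb 2 (Real.logb 2 (Real.logb 2 (n:ℝ))) ≤ (δ*c/2) * (n:ℝ) := by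
    have h1 : Real.logb 2 (Real.logb 2 (Real.logb 2 (n:ℝ)))
        ≤ Real.logb 2 (Real.logb 2 (n:ℝ)) := logb_two_le_self hM0
    have h2 : Real.logb 2 (Real.logb 2 (n:ℝ)) ≤ Real.logb 2 (n:ℝ) := logb_two_le_self hlgn0
    have h3 : Real.logb 2 (n:ℝ) ≤ 2 * Real.sqrt (n:ℝ) := logb_two_le_two_sqrt hn0
    have hsq' : 4 ≤ Real.sqrt (n:ℝ) * (δ*c) := (div_le_iff₀ (by positivity)).mp hsq
    have h5 : 4 * Real.sqrt (n:ℝ) ≤ (Real.sqrt (n:ℝ) * (δ*c)) * Real.sqrt (n:ℝ) :=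
      mul_le_mul_of_nonneg_right hsq' (Real.sqrt_nonneg _)
    have h6 : (Real.sqrt (n:ℝ) * (δ*c)) * Real.sqrt (n:ℝ) = δ*c*(n:ℝ) := by
      have hms := Real.mul_self_sqrt hn0.le
      calc (Real.sqrt (n:ℝ) * (δ*c)) * Real.sqrt (n:ℝ)
          = Real.sqrt (n:ℝ) * Real.sqrt (n:ℝ) * (δ*c) := by ring
        _ = (n:ℝ) * (δ*c) := by rw [hms]
        _ = δ*c*(n:ℝ) := by ring
    linarith
  have hm_ub : ((⌈c * (n:ℝ) / Real.logb 2 (Real.logb 2 (Real.logb 2 (n:ℝ)))⌉₊ : ℕ) : ℝ)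
      ≤ (1 + δ/2) * (c * (n:ℝ) / Real.logb 2 (Real.logb 2 (Real.logb 2 (n:ℝ)))) := by
    have h1 : ((⌈c * (n:ℝ) / Real.logb 2 (Real.logb 2 (Real.logb 2 (n:ℝ)))⌉₊ : ℕ) : ℝ)
        < c * (n:ℝ) / Real.logb 2 (Real.logb 2 (Real.logb 2 (n:ℝ))) + 1 :=
      Nat.ceil_lt_add_one hmr0.le
    have h2 : c * (n:ℝ) / ((δ*c/2) * (n:ℝ))
        ≤ c * (n:ℝ) / Real.logb 2 (Real.logb 2 (Real.logb 2 (n:ℝ))) :=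
      div_le_div_of_nonneg_left (by positivity) hL0 hL_sq
    have h3 : c * (n:ℝ) / ((δ*c/2) * (n:ℝ)) = 2/δ := by
      field_simp
    have h4' : 1 ≤ (δ/2) * (c * (n:ℝ) / Real.logb 2 (Real.logb 2 (Real.logb 2 (n:ℝ)))) := by
      rw [h3] at h2
      have h5 := mul_le_mul_of_nonneg_left h2 (by positivity : (0:ℝ) ≤ δ/2)
      calc (1:ℝ) = (δ/2) * (2/δ) := by field_simp
        _ ≤ _ := h5
    nlinarith
  have hLlog : (ε/c) * Real.logb 2 (Real.logb 2 (Real.logb 2 (n:ℝ)))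
      = α * Real.log (Real.logb 2 (Real.logb 2 (n:ℝ))) := by
    rw [Real.logb, hαdef]
    field_simp
  exact abstract_bound ε c δ α _ _ (n:ℝ) _ _ j hε hc hδ0 hδ1 hα0 hM0 hL0 hLlog hexpval
    hεnr hK_ub hKd hk1 hm1 hmr0 hm_lb hm_ub
end

section
/- Throw n balls independently and uniformly at random into ⌈n/(4 ln n)⌉ bins, where n ≥ 4. For any fixed bin, the probability that it contains exactly one ball is at most 1/n². Consequently, by a union bound over O(n) such slots, the probability that any slot in windows up to size n/(4 ln n) contains exactly one ball is O(1/n). -/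
/-! The maps `Fin n → Fin m` putting exactly one ball into bin `j` are determined by that
ball and by a map of the other `n - 1` balls into the other `m - 1` bins, so they form a fraction
`n (m - 1)^(n-1) / m^n ≤ n (1 - 1/m)^(n-1) ≤ n e^{-(n-1)/m}` of all maps. For
`m = ⌈n / (4 log n)⌉` and `n` large (`12 log n + 4 ≤ n`) one has `(n - 1)/m ≥ 3 log n`, so this
is at most `1/n²`; a union bound over the `m ≤ n` bins gives `1/n`. -/

open Finset Filter Real

section Fibers

variable {α β : Type*} [Fintype α] [DecidableEq α] [Fintype β] [DecidableEq β]

lemma mem_piFinset_ite_singleton_iff (j : β) (i : α) (f : α → β) :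
    f ∈ Fintype.piFinset (fun k => if k = i then {j} else {j}ᶜ) ↔
      ∀ k, f k = j ↔ k = i := by
  simp only [Fintype.mem_piFinset]
  refine forall_congr' fun k => ?_
  split_ifs with hk <;> simp [hk]

lemma card_piFinset_ite_singleton (j : β) (i : α) :
    #(Fintype.piFinset fun k => if k = i then {j} else {j}ᶜ) =
      (Fintype.card β - 1) ^ (Fintype.card α - 1) := by
  simp only [Fintype.card_piFinset, apply_ite card, card_singleton, card_compl, prod_ite,
    prod_const_one, one_mul, prod_const, filter_ne', card_erase_of_mem (mem_univ i), card_univ]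

lemma card_filter_card_fiber_eq_one (j : β) :
    #{f : α → β | #{i | f i = j} = 1} =
      Fintype.card α * (Fintype.card β - 1) ^ (Fintype.card α - 1) := by
  have hunion : ({f : α → β | #{i | f i = j} = 1} : Finset (α → β)) =
      univ.biUnion fun i => Fintype.piFinset fun k => if k = i then {j} else {j}ᶜ := by
    ext f
    simp only [mem_filter, mem_univ, true_and, mem_biUnion, mem_piFinset_ite_singleton_iff,
      card_eq_one, Finset.ext_iff, mem_singleton]
  rw [hunion, card_biUnion]
  · simp only [card_piFinset_ite_singleton, sum_const, card_univ, smul_eq_mul]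
  · intro i _ i' _ hii'
    simp only [Function.onFun, Finset.disjoint_left, mem_piFinset_ite_singleton_iff]
    exact fun f hf hf' => hii' ((hf' i).1 ((hf i).2 rfl))

lemma card_filter_exists_le_sum {γ ι : Type*} [Fintype γ] [Fintype ι] (p : ι → γ → Prop)
    [∀ j, DecidablePred (p j)] [DecidablePred fun x => ∃ j, p j x] :
    #{x | ∃ j, p j x} ≤ ∑ j, #{x | p j x} := by
  classical
  calc #{x | ∃ j, p j x} = #(univ.biUnion fun j => {x | p j x}) := by
        congr 1; ext x; simp
    _ ≤ _ := card_biUnion_le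

lemma card_filter_card_fiber_eq_one_div_le (j : β) :
    (#{f : α → β | #{i | f i = j} = 1} : ℝ) / (Fintype.card β ^ Fintype.card α : ℕ) ≤
      Fintype.card α * (1 - 1 / Fintype.card β : ℝ) ^ (Fintype.card α - 1) := by
  rw [card_filter_card_fiber_eq_one]
  set n := Fintype.card α
  set m := Fintype.card β
  have hm : 1 ≤ m := Fintype.card_pos_iff.mpr ⟨j⟩
  have hm' : (1 : ℝ) ≤ m := by exact_mod_cast hm
  push_cast [Nat.cast_sub hm]
  calc (n : ℝ) * (m - 1) ^ (n - 1) / m ^ n ≤ n * (m - 1) ^ (n - 1) / m ^ (n - 1) := by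
        have : 0 ≤ (m : ℝ) - 1 := by linarith
        gcongr
        exact n.sub_le 1
    _ = n * (1 - 1 / m : ℝ) ^ (n - 1) := by
        rw [one_sub_div (by positivity), div_pow, mul_div_assoc]

end Fibers

lemma one_sub_pow_le_exp_neg_mul {x : ℝ} (hx : x ≤ 1) (k : ℕ) :
    (1 - x) ^ k ≤ exp (-(k * x)) := by
  calc (1 - x) ^ k ≤ exp (-x) ^ k :=
        pow_le_pow_left₀ (by linarith) (by linarith [add_one_le_exp (-x)]) k
    _ = exp (-(k * x)) := by rw [← exp_nat_mul]; ring_nf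

lemma mul_one_sub_inv_pow_le_inv_sq {n m : ℕ} (hm : 0 < m) (h : 3 * m * log n ≤ n - 1) :
    n * (1 - 1 / m : ℝ) ^ (n - 1) ≤ 1 / n ^ 2 := by
  have hn : 0 < n := Nat.pos_of_ne_zero (by rintro rfl; norm_num at h)
  have hm' : (0 : ℝ) < m := by exact_mod_cast hm
  have hn' : (0 : ℝ) < n := by exact_mod_cast hn
  have hexp : -(((n - 1 : ℕ) : ℝ) * (1 / m)) ≤ -(3 * log n) := by
    rw [Nat.cast_sub hn, Nat.cast_one, neg_le_neg_iff, ← div_eq_mul_one_div, le_div_iff₀ hm']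
    linarith
  calc n * (1 - 1 / m : ℝ) ^ (n - 1) ≤ n * exp (-(((n - 1 : ℕ) : ℝ) * (1 / m))) := by
        gcongr
        exact one_sub_pow_le_exp_neg_mul (div_le_one_of_le₀ (by exact_mod_cast hm) hm'.le) _
    _ ≤ n * exp (-(3 * log n)) := by gcongr
    _ = 1 / n ^ 2 := by
        rw [exp_neg, ← log_rpow hn', exp_log (by positivity)]
        field_simp
        norm_cast

section Window

variable {x : ℝ}

lemma one_le_ceil_div_four_log (hx : 0 < x) (hlog : 0 < log x) : 1 ≤ ⌈x / (4 * log x)⌉₊ :=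
  Nat.one_le_ceil_iff.mpr (by positivity)

lemma ceil_div_four_log_le_self (n : ℕ) (hlog : 1 ≤ log n) :
    ⌈(n : ℝ) / (4 * log n)⌉₊ ≤ n :=
  Nat.ceil_le.mpr (div_le_self n.cast_nonneg (by linarith))

lemma three_mul_ceil_div_four_log_mul_log_le (hlog : 0 < log x) (hx : 12 * log x + 4 ≤ x) :
    3 * ⌈x / (4 * log x)⌉₊ * log x ≤ x - 1 := by
  have hx₀ : 0 ≤ x := by linarith
  have hceil : (⌈x / (4 * log x)⌉₊ : ℝ) ≤ x / (4 * log x) + 1 :=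
    (Nat.ceil_lt_add_one (by positivity)).le
  calc 3 * ⌈x / (4 * log x)⌉₊ * log x ≤ 3 * (x / (4 * log x) + 1) * log x := by gcongr
    _ = 3 / 4 * x + 3 * log x := by field_simp
    _ ≤ x - 1 := by linarith

end Window

lemma eventually_one_le_log_and_twelve_mul_log_add_four_le :
    ∀ᶠ n : ℕ in atTop, 1 ≤ log n ∧ 12 * log n + 4 ≤ n := by
  suffices ∀ᶠ x : ℝ in atTop, 1 ≤ log x ∧ 12 * log x + 4 ≤ x from
    tendsto_natCast_atTop_atTop.eventually this
  filter_upwards [tendsto_log_atTop.eventually_ge_atTop 1,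
    isLittleO_log_id_atTop.bound (show (0 : ℝ) < 1 / 24 by norm_num), eventually_ge_atTop 8]
    with x hlog hbound hx
  rw [Real.norm_of_nonneg (by linarith), id, Real.norm_of_nonneg (by linarith)] at hbound
  exact ⟨hlog, by linarith⟩

/-- Throw `n` balls uniformly and independently into `⌈n/(4 ln n)⌉` bins,
`n ≥ 4` sufficiently large.  Any fixed bin contains exactly one ball with
probability at most `1/n²`, and by a union bound the probability that some
bin contains exactly one ball is `O(1/n)`. -/
theorem early_window_no_success :
    ∃ N : ℕ, ∃ C : ℝ, 0 < C ∧ ∀ n : ℕ, 4 ≤ n → N ≤ n →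
      (∀ j : Fin ⌈(n : ℝ) / (4 * Real.log n)⌉₊,
        ((Finset.univ.filter
              (fun f : Fin n → Fin ⌈(n : ℝ) / (4 * Real.log n)⌉₊ =>
                (Finset.univ.filter (fun i : Fin n => f i = j)).card = 1)).card : ℝ) /
            ((⌈(n : ℝ) / (4 * Real.log n)⌉₊ : ℕ) ^ n : ℕ) ≤ 1 / (n : ℝ) ^ 2) ∧
      ((Finset.univ.filter
            (fun f : Fin n → Fin ⌈(n : ℝ) / (4 * Real.log n)⌉₊ =>
              ∃ j : Fin ⌈(n : ℝ) / (4 * Real.log n)⌉₊,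
                (Finset.univ.filter (fun i : Fin n => f i = j)).card = 1)).card : ℝ) /
          ((⌈(n : ℝ) / (4 * Real.log n)⌉₊ : ℕ) ^ n : ℕ) ≤ C / n := by
  obtain ⟨N, hN⟩ := eventually_atTop.mp eventually_one_le_log_and_twelve_mul_log_add_four_le
  refine ⟨N, 1, one_pos, fun n _ hn => ?_⟩
  obtain ⟨hlog, hlarge⟩ := hN n hn
  set m := ⌈(n : ℝ) / (4 * log n)⌉₊
  have hm : 0 < m := one_le_ceil_div_four_log (by linarith) (by linarith)
  have hmn : (m : ℝ) ≤ n := by exact_mod_cast ceil_div_four_log_le_self n hlog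
  have hsingle : ∀ j : Fin m, (#{f : Fin n → Fin m | #{i | f i = j} = 1} : ℝ) /
      (m ^ n : ℕ) ≤ 1 / (n : ℝ) ^ 2 := fun j => by
    have h := card_filter_card_fiber_eq_one_div_le (α := Fin n) j
    rw [Fintype.card_fin, Fintype.card_fin] at h
    exact h.trans <| mul_one_sub_inv_pow_le_inv_sq hm <|
      three_mul_ceil_div_four_log_mul_log_le (by linarith) hlarge
  refine ⟨hsingle, ?_⟩
  calc (#{f : Fin n → Fin m | ∃ j, #{i | f i = j} = 1} : ℝ) / (m ^ n : ℕ)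
      ≤ ∑ j : Fin m, (#{f : Fin n → Fin m | #{i | f i = j} = 1} : ℝ) / (m ^ n : ℕ) := by
        rw [← sum_div]
        gcongr
        exact_mod_cast card_filter_exists_le_sum fun j (f : Fin n → Fin m) =>
          #{i | f i = j} = 1
    _ ≤ ∑ _j : Fin m, 1 / (n : ℝ) ^ 2 := sum_le_sum fun j _ => hsingle j
    _ ≤ 1 / (n : ℝ) := by
        rw [sum_const, card_univ, Fintype.card_fin, nsmul_eq_mul]
        calc (m : ℝ) * (1 / n ^ 2) ≤ n * (1 / n ^ 2) := by gcongr
          _ = 1 / (n : ℝ) := by field_simp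
end

section
/- Let ε with 0 < ε ≤ 1 and small enough c > 0 be constants. Throw ⌊εn⌋ balls uniformly and independently into m = ⌈cn/log₂ log₂ log₂ n⌉ bins and let X be the number of bins with ≥ 2 balls. Then E[X] = Ω(n/log₂ log₂ log₂ n), and with probability at least 1 - 1/n, X = Ω(n/log₂ log₂ log₂ n). -/
/-!
A union bound over the bad placements suffices. If fewer than `m / 4` bins are collision bins, every
ball outside the set `T` of collision bins is alone in its bin, so at most `m` balls avoid `T`.
Choosing `T` (at most `2 ^ m` ways), the set `I` of balls that avoid it (at most `2 ^ b` ways) and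
then the placement (at most `m ^ #I * (m / 4) ^ (b - #I)` ways) bounds the number of bad placements
by `8 ^ m * m ^ b / 2 ^ b`. With `b = ⌊ε n⌋` balls and `m = ⌈c n / lg lg lg n⌉ = o(n)` bins this is
at most a `1 / n` fraction of all `m ^ b` placements, and `E[X] ≥ (m / 4) P(X ≥ m / 4)` gives the
bound on the expectation.
-/

/-- The number of bins containing 2 or more balls under placement `f`. -/
def collisionCount (balls bins : ℕ) (f : Fin balls → Fin bins) : ℕ :=
  (Finset.univ.filter (fun j : Fin bins =>
      2 ≤ (Finset.univ.filter (fun i : Fin balls => f i = j)).card)).card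

open Finset Filter Real

lemma card_filter_forall_notMem_mem {α β : Type*} [Fintype α] [DecidableEq α] [Fintype β]
    [DecidableEq β] (I : Finset α) (T : Finset β)
    [DecidablePred fun f : α → β => ∀ a ∉ I, f a ∈ T] :
    #{f : α → β | ∀ a ∉ I, f a ∈ T} = Fintype.card β ^ #I * #T ^ #Iᶜ := by
  have : ({f : α → β | ∀ a ∉ I, f a ∈ T} : Finset _) =
      Fintype.piFinset (fun a => if a ∈ I then univ else T) := by
    ext f
    simp only [mem_filter, mem_univ, true_and, Fintype.mem_piFinset]
    refine forall_congr' fun a => ?_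
    split_ifs <;> simp [*]
  rw [this, Fintype.card_piFinset]
  simp only [apply_ite card]
  rw [prod_ite, prod_const, prod_const, card_univ, filter_mem_eq_of_subset (subset_univ I)]
  congr 3
  ext
  simp

section
variable {b m : ℕ}

/-- `collisionCount b m f` is `#(collisionBins f)` by definition. -/
def collisionBins (f : Fin b → Fin m) : Finset (Fin m) := {j | 2 ≤ #{i | f i = j}}

lemma card_filter_notMem_collisionBins_le (f : Fin b → Fin m) :
    #{i | f i ∉ collisionBins f} ≤ m := by
  calc _ ≤ #(univ : Finset (Fin m)) := card_le_card_of_injOn f (by simp) ?_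
    _ = m := by simp
  intro i hi j hj hij
  simp only [coe_filter, collisionBins, mem_filter, mem_univ, true_and, not_le] at hi
  exact card_le_one.mp (Nat.le_of_lt_succ hi) i (by simp) j (by simp [hij])

lemma card_filter_forall_notMem_mem_mul_four_pow_le {I : Finset (Fin b)} {T : Finset (Fin m)}
    (hT : 4 * #T ≤ m) (hI : #I ≤ m) :
    #{f : Fin b → Fin m | ∀ i ∉ I, f i ∈ T} * 4 ^ b ≤ 4 ^ m * m ^ b := by
  have hIb : #I ≤ b := by simpa using card_le_univ I
  rw [card_filter_forall_notMem_mem, Fintype.card_fin, card_compl, Fintype.card_fin]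
  calc m ^ #I * #T ^ (b - #I) * 4 ^ b = 4 ^ #I * (m ^ #I * (4 * #T) ^ (b - #I)) := by
        rw [mul_pow, ← pow_mul_pow_sub 4 hIb]; ring
    _ ≤ 4 ^ m * (m ^ #I * m ^ (b - #I)) := by gcongr; norm_num
    _ = 4 ^ m * m ^ b := by rw [pow_mul_pow_sub m hIb]

lemma card_few_collisions_mul_two_pow_le :
    #{f : Fin b → Fin m | 4 * collisionCount b m f ≤ m} * 2 ^ b ≤ 8 ^ m * m ^ b := by
  set P : Finset (Finset (Fin m) × Finset (Fin b)) :=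
    ({T : Finset (Fin m) | 4 * #T ≤ m} : Finset _) ×ˢ ({I : Finset (Fin b) | #I ≤ m} : Finset _)
  have hcover : ({f : Fin b → Fin m | 4 * collisionCount b m f ≤ m} : Finset _) ⊆
      P.biUnion fun p => {f : Fin b → Fin m | ∀ i ∉ p.2, f i ∈ p.1} := by
    intro f hf
    simp only [mem_filter, mem_univ, true_and] at hf
    simp only [mem_biUnion, P, mem_product, mem_filter, mem_univ, true_and, Prod.exists]
    exact ⟨collisionBins f, ({i | f i ∉ collisionBins f} : Finset _),
      ⟨hf, card_filter_notMem_collisionBins_le f⟩, fun i hi => by simpa using hi⟩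
  have hP : #P ≤ 2 ^ m * 2 ^ b := by
    rw [card_product]
    gcongr <;> exact (card_filter_le _ _).trans (by simp)
  have hcount : #{f : Fin b → Fin m | 4 * collisionCount b m f ≤ m} * 4 ^ b ≤
      2 ^ m * 2 ^ b * (4 ^ m * m ^ b) :=
    calc _ ≤ (∑ p ∈ P, #{f : Fin b → Fin m | ∀ i ∉ p.2, f i ∈ p.1}) * 4 ^ b := by
          gcongr
          exact (card_le_card hcover).trans card_biUnion_le
      _ ≤ ∑ _p ∈ P, 4 ^ m * m ^ b := by
          rw [sum_mul]
          refine sum_le_sum fun p hp => ?_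
          simp only [P, mem_product, mem_filter, mem_univ, true_and] at hp
          exact card_filter_forall_notMem_mem_mul_four_pow_le hp.1 hp.2
      _ ≤ _ := by
          rw [sum_const, smul_eq_mul]
          gcongr
  refine Nat.le_of_mul_le_mul_right (c := 2 ^ b) ?_ (by positivity)
  calc _ = #{f : Fin b → Fin m | 4 * collisionCount b m f ≤ m} * 4 ^ b := by
        rw [mul_assoc, ← mul_pow]; norm_num
    _ ≤ _ := hcount
    _ = _ := by rw [show (8 : ℕ) = 2 * 4 by rfl, mul_pow]; ring

lemma mul_card_few_collisions_le {n : ℕ} (h : n * 8 ^ m ≤ 2 ^ b) :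
    n * #{f : Fin b → Fin m | 4 * collisionCount b m f ≤ m} ≤ m ^ b := by
  refine Nat.le_of_mul_le_mul_left (c := 8 ^ m) ?_ (by positivity)
  calc _ = #{f : Fin b → Fin m | 4 * collisionCount b m f ≤ m} * (n * 8 ^ m) := by ring
    _ ≤ #{f : Fin b → Fin m | 4 * collisionCount b m f ≤ m} * 2 ^ b := by gcongr
    _ ≤ _ := card_few_collisions_mul_two_pow_le

end

section
variable {Ω : Type*} [Fintype Ω] [Nonempty Ω]

lemma one_sub_inv_le_card_filter_div {p : Ω → Prop} [DecidablePred p] {n : ℝ} (hn : 0 < n)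
    (h : n * #{ω | ¬ p ω} ≤ Fintype.card Ω) :
    1 - 1 / n ≤ #{ω | p ω} / Fintype.card Ω := by
  have hΩ : (0 : ℝ) < Fintype.card Ω := by exact_mod_cast Fintype.card_pos
  have hsplit : (#{ω | p ω} + #{ω | ¬ p ω} : ℝ) = Fintype.card Ω := by
    exact_mod_cast card_filter_add_card_filter_not (s := univ) p
  have hbad : (#{ω | ¬ p ω} : ℝ) ≤ Fintype.card Ω / n := by
    rw [le_div_iff₀ hn]
    linarith
  rw [le_div_iff₀ hΩ, sub_mul, one_mul, one_div_mul_eq_div]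
  linarith

lemma le_sum_div_card_and_one_sub_inv_le {X : Ω → ℝ} (hX : ∀ ω, 0 ≤ X ω) {a n : ℝ}
    (ha : 0 ≤ a) (hn : 2 ≤ n) (h : n * #{ω | X ω < 2 * a} ≤ Fintype.card Ω) :
    a ≤ (∑ ω, X ω) / Fintype.card Ω ∧ 1 - 1 / n ≤ #{ω | a ≤ X ω} / Fintype.card Ω := by
  have hΩ : (0 : ℝ) < Fintype.card Ω := by exact_mod_cast Fintype.card_pos
  have hgood : 1 - 1 / n ≤ #{ω | 2 * a ≤ X ω} / Fintype.card Ω :=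
    one_sub_inv_le_card_filter_div (by linarith) (by simpa using h)
  have hmarkov : 2 * a * #{ω | 2 * a ≤ X ω} ≤ ∑ ω, X ω :=
    calc 2 * a * #{ω | 2 * a ≤ X ω} ≤ ∑ ω ∈ {ω | 2 * a ≤ X ω}, X ω := by
          rw [mul_comm, ← nsmul_eq_mul]
          exact card_nsmul_le_sum _ _ _ fun ω hω => (mem_filter.mp hω).2
      _ ≤ ∑ ω, X ω := sum_le_sum_of_subset_of_nonneg (subset_univ _) fun ω _ _ => hX ω
  constructor
  · rw [le_div_iff₀ hΩ] at hgood ⊢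
    have : 1 / n ≤ 1 / 2 := one_div_le_one_div_of_le two_pos hn
    calc a * Fintype.card Ω = 2 * a * (1 / 2 * Fintype.card Ω) := by ring
      _ ≤ 2 * a * ((1 - 1 / n) * Fintype.card Ω) := by gcongr; linarith
      _ ≤ 2 * a * #{ω | 2 * a ≤ X ω} := by gcongr
      _ ≤ ∑ ω, X ω := hmarkov
  · have hsub : ({ω | 2 * a ≤ X ω} : Finset Ω) ⊆ ({ω | a ≤ X ω} : Finset Ω) :=
      monotone_filter_right _ fun ω _ hω => by linarith
    exact hgood.trans (by gcongr)
end

lemma tendsto_logb_logb_logb_natCast :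
    Tendsto (fun n : ℕ => logb 2 (logb 2 (logb 2 n))) atTop atTop :=
  (tendsto_logb_atTop one_lt_two).comp <| (tendsto_logb_atTop one_lt_two).comp <|
    (tendsto_logb_atTop one_lt_two).comp tendsto_natCast_atTop_atTop

lemma eventually_mul_eight_pow_ceil_le_two_pow_floor {L : ℕ → ℝ} (hL : Tendsto L atTop atTop)
    {ε c : ℝ} (hε : 0 < ε) (hc : 0 < c) :
    ∀ᶠ n : ℕ in atTop, n * 8 ^ ⌈c * n / L n⌉₊ ≤ 2 ^ ⌊ε * n⌋₊ := by
  have hδ : 0 < ε * log 2 / 4 := by positivity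
  filter_upwards [hL.eventually_gt_atTop 0, hL.eventually_ge_atTop (12 * c / ε),
    tendsto_natCast_atTop_atTop.eventually (isLittleO_log_id_atTop.bound hδ),
    eventually_ge_atTop ⌈8 / ε⌉₊] with n hL0 hLc hlog hn8
  have hn : 8 ≤ ε * n := by
    rw [← div_le_iff₀' hε]
    exact (Nat.ceil_le.mp hn8)
  have hn0 : (0 : ℝ) < n := pos_of_mul_pos_right (by linarith) hε.le
  have hlog' : log n ≤ ε * log 2 / 4 * n := by
    simpa [abs_of_nonneg hn0.le] using hlog.trans' (le_abs_self _)
  have hm : (⌈c * n / L n⌉₊ : ℝ) ≤ ε * n / 12 + 1 := by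
    have hcL : c * n / L n ≤ ε * n / 12 := by
      rw [div_le_iff₀ hL0]
      rw [div_le_iff₀ hε] at hLc
      nlinarith
    linarith [Nat.ceil_lt_add_one (by positivity : 0 ≤ c * n / L n)]
  have hb : ε * n - 1 ≤ ⌊ε * n⌋₊ := (Nat.sub_one_lt_floor _).le
  have hexp : log n + ⌈c * n / L n⌉₊ * log 8 ≤ ⌊ε * n⌋₊ * log 2 := by
    have h8 : log 8 = 3 * log 2 := by
      rw [show (8 : ℝ) = 2 ^ 3 by norm_num, log_pow]; norm_num
    have hl2 := log_pos one_lt_two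
    rw [h8]
    nlinarith
  have hreal : (n : ℝ) * 8 ^ ⌈c * n / L n⌉₊ ≤ 2 ^ ⌊ε * n⌋₊ := by
    rw [← log_le_log_iff (by positivity) (by positivity), log_mul hn0.ne' (by positivity),
      log_pow, log_pow]
    exact hexp
  exact_mod_cast hreal

theorem llb_collisions_per_window_general (ε : ℝ) (hε : 0 < ε) :
    ∃ c₀ : ℝ, 0 < c₀ ∧ ∀ c : ℝ, 0 < c → c ≤ c₀ →
      ∃ a : ℝ, 0 < a ∧ ∃ N : ℕ, ∀ n : ℕ, N ≤ n →
        a * (n / Real.logb 2 (Real.logb 2 (Real.logb 2 n))) ≤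
          (∑ f : Fin ⌊ε * n⌋₊ →
              Fin ⌈c * n / Real.logb 2 (Real.logb 2 (Real.logb 2 n))⌉₊,
            (collisionCount ⌊ε * n⌋₊
              ⌈c * n / Real.logb 2 (Real.logb 2 (Real.logb 2 n))⌉₊ f : ℝ)) /
            ((⌈c * n / Real.logb 2 (Real.logb 2 (Real.logb 2 n))⌉₊ : ℕ) ^ ⌊ε * n⌋₊ : ℕ) ∧
        1 - 1 / (n : ℝ) ≤
          ((Finset.univ.filter
              (fun f : Fin ⌊ε * n⌋₊ →
                  Fin ⌈c * n / Real.logb 2 (Real.logb 2 (Real.logb 2 n))⌉₊ =>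
                a * (n / Real.logb 2 (Real.logb 2 (Real.logb 2 n))) ≤
                  (collisionCount ⌊ε * n⌋₊
                    ⌈c * n / Real.logb 2 (Real.logb 2 (Real.logb 2 n))⌉₊ f : ℝ))).card : ℝ) /
            ((⌈c * n / Real.logb 2 (Real.logb 2 (Real.logb 2 n))⌉₊ : ℕ) ^ ⌊ε * n⌋₊ : ℕ) := by
  refine ⟨1, one_pos, fun c hc _ => ⟨c / 8, by positivity, ?_⟩⟩
  have hL := tendsto_logb_logb_logb_natCast
  obtain ⟨N, hN⟩ := eventually_atTop.mp <| (hL.eventually_gt_atTop 0).and <|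
    (eventually_ge_atTop 2).and <| eventually_mul_eight_pow_ceil_le_two_pow_floor hL hε hc
  refine ⟨N, fun n hn => ?_⟩
  obtain ⟨hL0, hn2, hpow⟩ := hN n hn
  set L := logb 2 (logb 2 (logb 2 (n : ℝ)))
  set b := ⌊ε * n⌋₊
  set m := ⌈c * n / L⌉₊
  have hn0 : (0 : ℝ) < n := by exact_mod_cast (by omega : 0 < n)
  have hm : 0 < m := Nat.lt_ceil.mpr (by simp only [Nat.cast_zero]; positivity)
  have hbad : ({f : Fin b → Fin m | (collisionCount b m f : ℝ) < 2 * (c / 8 * (n / L))} : Finset _)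
      ⊆ ({f | 4 * collisionCount b m f ≤ m} : Finset _) := by
    intro f hf
    simp only [mem_filter, mem_univ, true_and] at hf ⊢
    have : (4 * collisionCount b m f : ℝ) < m := by
      linarith [Nat.le_ceil (c * n / L), show 2 * (c / 8 * (n / L)) = c * n / L / 4 by ring]
    exact_mod_cast this.le
  have hcard : Fintype.card (Fin b → Fin m) = m ^ b := by simp
  rw [← hcard]
  have : Nonempty (Fin m) := ⟨⟨0, hm⟩⟩
  refine le_sum_div_card_and_one_sub_inv_le (fun f => Nat.cast_nonneg _) (by positivity)
    (by exact_mod_cast hn2) ?_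
  rw [hcard]
  exact_mod_cast (Nat.mul_le_mul_left n (card_le_card hbad)).trans (mul_card_few_collisions_le hpow)

/-- Throw `⌊εn⌋` balls uniformly into `⌈cn / lg lg lg n⌉` bins
(`0 < ε ≤ 1`, `c > 0` small enough) and let `X` be the number of bins with
≥ 2 balls.  Then `E[X] = Ω(n / lg lg lg n)` and, with probability at least
`1 - 1/n`, `X = Ω(n / lg lg lg n)`. -/
theorem llb_collisions_per_window (ε : ℝ) (hε : 0 < ε) (hε1 : ε ≤ 1) :
    ∃ c₀ : ℝ, 0 < c₀ ∧ ∀ c : ℝ, 0 < c → c ≤ c₀ →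
      ∃ a : ℝ, 0 < a ∧ ∃ N : ℕ, ∀ n : ℕ, N ≤ n →
        a * (n / Real.logb 2 (Real.logb 2 (Real.logb 2 n))) ≤
          (∑ f : Fin ⌊ε * n⌋₊ →
              Fin ⌈c * n / Real.logb 2 (Real.logb 2 (Real.logb 2 n))⌉₊,
            (collisionCount ⌊ε * n⌋₊
              ⌈c * n / Real.logb 2 (Real.logb 2 (Real.logb 2 n))⌉₊ f : ℝ)) /
            ((⌈c * n / Real.logb 2 (Real.logb 2 (Real.logb 2 n))⌉₊ : ℕ) ^ ⌊ε * n⌋₊ : ℕ) ∧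
        1 - 1 / (n : ℝ) ≤
          ((Finset.univ.filter
              (fun f : Fin ⌊ε * n⌋₊ →
                  Fin ⌈c * n / Real.logb 2 (Real.logb 2 (Real.logb 2 n))⌉₊ =>
                a * (n / Real.logb 2 (Real.logb 2 (Real.logb 2 n))) ≤
                  (collisionCount ⌊ε * n⌋₊
                    ⌈c * n / Real.logb 2 (Real.logb 2 (Real.logb 2 n))⌉₊ f : ℝ))).card : ℝ) /
            ((⌈c * n / Real.logb 2 (Real.logb 2 (Real.logb 2 n))⌉₊ : ℕ) ^ ⌊ε * n⌋₊ : ℕ) :=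
  llb_collisions_per_window_general ε hε
end
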